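/- arXiv:2009.08090 — 4 statements merged into one kernel-verified Lean document; each statement's English description precedes it below -/
import Mathlib

section
/- Soundness of the robust semantics of BB-STL: for every BB-STL formula φ, every signal x ∈ 𝒮 and every t ∈ ℝ, (i) if ρ_φ(x)(t) < 0 then (x, t) does not satisfy φ; (ii) if ρ_φ(x)(t) > 0 then (x, t) satisfies φ; and (iii) for every signal y ∈ 𝒮 with d(x, y) < ρ_φ(x)(t): if (x, t) ⊨ φ then (y, t) ⊨ φ, and if (x, t) ⊭ φ then (y, t) ⊭ φ. -/
open MeasureTheory

/-- The space of signals: infinitely differentiable real functions with compact support. -/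
def Signal (x : ℝ → ℝ) : Prop := ContDiff ℝ (⊤ : ℕ∞) x ∧ HasCompactSupport x

/-- The space of measurement kernels: nonzero integrable functions with L¹ norm at most 1. -/
def Kernel (f : ℝ → ℝ) : Prop :=
  f ≠ 0 ∧ MeasureTheory.Integrable f ∧ (∫ t, |f t|) ≤ 1

/-- d(x,y) = sup { ∫ (x(τ) − y(τ)) f(τ) dτ : f ∈ ℱ }. -/
noncomputable def dS (x y : ℝ → ℝ) : ℝ :=
  sSup {r : ℝ | ∃ f, Kernel f ∧ r = ∫ τ, (x τ - y τ) * f τ}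

/-- The measurement ⟨f(·−t), x⟩ = ∫ f(τ−t) x(τ) dτ. -/
noncomputable def meas (f x : ℝ → ℝ) (t : ℝ) : ℝ := ∫ τ, f (τ - t) * x τ

/-- BB-STL formulas: φ ::= ⊤ | p_f (f ∈ ℱ) | ¬φ | φ₁ ∨ φ₂ | Once_[a,b] φ | Hist_[a,b] φ |
φ₁ Since_[a,b] φ₂, with [a,b] a compact interval of ℝ. -/
inductive BBSTL where
  | top : BBSTL
  | atom : {f : ℝ → ℝ // Kernel f} → BBSTL
  | neg : BBSTL → BBSTL
  | or : BBSTL → BBSTL → BBSTL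
  | once : ℝ → ℝ → BBSTL → BBSTL
  | hist : ℝ → ℝ → BBSTL → BBSTL
  | since : ℝ → ℝ → BBSTL → BBSTL → BBSTL

/-- Boolean semantics of BB-STL; note that t − [a,b] = [t−b, t−a]. -/
def Sat (x : ℝ → ℝ) : BBSTL → ℝ → Prop
  | .top, _ => True
  | .atom f, t => 0 ≤ meas f.1 x t
  | .neg φ, t => ¬ Sat x φ t
  | .or φ ψ, t => Sat x φ t ∨ Sat x ψ t
  | .once a b φ, t => ∃ t' ∈ Set.Icc (t - b) (t - a), Sat x φ t'
  | .hist a b φ, t => ∀ t' ∈ Set.Icc (t - b) (t - a), Sat x φ t'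
  | .since a b φ ψ, t => ∃ t' ∈ Set.Icc (t - b) (t - a),
      Sat x ψ t' ∧ ∀ t'' ∈ Set.Ioc t' t, Sat x φ t''

/-- Robust semantics of BB-STL, with values in ℝ ∪ {±∞}. -/
noncomputable def rob (x : ℝ → ℝ) : BBSTL → ℝ → EReal
  | .top, _ => ⊤
  | .atom f, t => ((meas f.1 x t : ℝ) : EReal)
  | .neg φ, t => - rob x φ t
  | .or φ ψ, t => max (rob x φ t) (rob x ψ t)
  | .once a b φ, t => ⨆ t' ∈ Set.Icc (t - b) (t - a), rob x φ t'
  | .hist a b φ, t => ⨅ t' ∈ Set.Icc (t - b) (t - a), rob x φ t'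
  | .since a b φ ψ, t => ⨆ t' ∈ Set.Icc (t - b) (t - a),
      min (rob x ψ t') (⨅ t'' ∈ Set.Ioc t' t, rob x φ t'')


lemma kernel_indicator : Kernel (Set.indicator (Set.Icc (0:ℝ) 1) (fun _ => (1:ℝ))) := by
  refine ⟨?_, ?_, ?_⟩
  · intro h
    have := congrFun h 0
    simp [Set.indicator_of_mem, Set.mem_Icc] at this
  · rw [integrable_indicator_iff measurableSet_Icc]
    exact integrableOn_const (by simp)
  · have : ∀ τ, |Set.indicator (Set.Icc (0:ℝ) 1) (fun _ => (1:ℝ)) τ|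
        = Set.indicator (Set.Icc (0:ℝ) 1) (fun _ => (1:ℝ)) τ := by
      intro τ; by_cases h : τ ∈ Set.Icc (0:ℝ) 1 <;> simp [h]
    rw [integral_congr_ae (Filter.Eventually.of_forall this),
      integral_indicator_const _ measurableSet_Icc]
    simp

lemma kernel_neg {f : ℝ → ℝ} (hf : Kernel f) : Kernel (fun τ => -f τ) := by
  refine ⟨?_, hf.2.1.neg, by simpa using hf.2.2⟩
  intro h
  exact hf.1 (funext fun τ => by have := congrFun h τ; simpa [neg_eq_zero] using this)

lemma signal_sub_bound {x y : ℝ → ℝ} (hx : Signal x) (hy : Signal y) :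
    ∃ C, 0 ≤ C ∧ ∀ τ, |x τ - y τ| ≤ C := by
  have hc : Continuous (fun τ => x τ - y τ) := hx.1.continuous.sub hy.1.continuous
  have hs : HasCompactSupport (fun τ => x τ - y τ) := by
    simpa [sub_eq_add_neg, Pi.add_def, Pi.neg_def] using hx.2.add (HasCompactSupport.neg hy.2)
  obtain ⟨C, hC⟩ := hs.exists_bound_of_continuous hc
  exact ⟨max C 0, le_max_right _ _, fun τ => by
    simpa using (hC τ).trans (le_max_left C 0)⟩

lemma integrable_sub_mul {x y f : ℝ → ℝ} (hx : Signal x) (hy : Signal y) (hf : Integrable f) :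
    Integrable (fun τ => (x τ - y τ) * f τ) := by
  obtain ⟨C, _, hC⟩ := signal_sub_bound hx hy
  exact hf.bdd_mul ((hx.1.continuous.sub hy.1.continuous).aestronglyMeasurable)
    (c := C) (Filter.Eventually.of_forall fun τ => by simpa using hC τ)

lemma dS_bddAbove {x y : ℝ → ℝ} (hx : Signal x) (hy : Signal y) :
    BddAbove {r : ℝ | ∃ f, Kernel f ∧ r = ∫ τ, (x τ - y τ) * f τ} := by
  obtain ⟨C, hC0, hC⟩ := signal_sub_bound hx hy
  refine ⟨C, fun r hr => ?_⟩
  obtain ⟨f, hf, rfl⟩ := hr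
  calc ∫ τ, (x τ - y τ) * f τ ≤ ∫ τ, C * |f τ| := by
        refine integral_mono (integrable_sub_mul hx hy hf.2.1) (hf.2.1.abs.const_mul C)
          (fun τ => ?_)
        calc (x τ - y τ) * f τ ≤ |(x τ - y τ) * f τ| := le_abs_self _
          _ = |x τ - y τ| * |f τ| := abs_mul _ _
          _ ≤ C * |f τ| := mul_le_mul_of_nonneg_right (hC τ) (abs_nonneg _)
    _ = C * ∫ τ, |f τ| := by rw [integral_const_mul]
    _ ≤ C * 1 := by gcongr; exact hf.2.2
    _ = C := mul_one C

lemma mem_dS_set {x y f : ℝ → ℝ} (hf : Kernel f) :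
    (∫ τ, (x τ - y τ) * f τ) ∈ {r : ℝ | ∃ g, Kernel g ∧ r = ∫ τ, (x τ - y τ) * g τ} :=
  ⟨f, hf, rfl⟩

lemma dS_nonneg {x y : ℝ → ℝ} (hx : Signal x) (hy : Signal y) : 0 ≤ dS x y := by
  set f := Set.indicator (Set.Icc (0:ℝ) 1) (fun _ => (1:ℝ))
  have h1 : (∫ τ, (x τ - y τ) * f τ) ≤ dS x y :=
    le_csSup (dS_bddAbove hx hy) (mem_dS_set kernel_indicator)
  have h2 : (∫ τ, (x τ - y τ) * (-f τ)) ≤ dS x y :=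
    le_csSup (dS_bddAbove hx hy) (mem_dS_set (kernel_neg kernel_indicator))
  have h3 : (∫ τ, (x τ - y τ) * (-f τ)) = -∫ τ, (x τ - y τ) * f τ := by
    rw [← integral_neg]; congr 1; funext τ; ring
  rw [h3] at h2
  linarith

lemma dS_comm (x y : ℝ → ℝ) : dS x y = dS y x := by
  unfold dS
  congr 1
  ext r
  constructor
  · rintro ⟨f, hf, rfl⟩
    exact ⟨fun τ => -f τ, kernel_neg hf, by congr 1; funext τ; ring⟩
  · rintro ⟨f, hf, rfl⟩
    exact ⟨fun τ => -f τ, kernel_neg hf, by congr 1; funext τ; ring⟩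

lemma meas_sub_le {x y f : ℝ → ℝ} (hx : Signal x) (hy : Signal y) (hf : Kernel f) (t : ℝ) :
    meas f x t ≤ meas f y t + dS x y := by
  have hg : Kernel (fun τ => f (τ - t)) := by
    refine ⟨?_, hf.2.1.comp_sub_right t, ?_⟩
    · intro h
      exact hf.1 (funext fun s => by
        have := congrFun h (s + t); simpa using this)
    · rw [show (∫ τ, |f (τ - t)|) = ∫ τ, |f τ| from
        integral_sub_right_eq_self (fun τ => |f τ|) t]
      exact hf.2.2
  have hbx : ∃ C, ∀ τ, ‖x τ‖ ≤ C := hx.2.exists_bound_of_continuous hx.1.continuous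
  have hby : ∃ C, ∀ τ, ‖y τ‖ ≤ C := hy.2.exists_bound_of_continuous hy.1.continuous
  have hix : Integrable (fun τ => f (τ - t) * x τ) := by
    have := (hf.2.1.comp_sub_right t).bdd_mul hx.1.continuous.aestronglyMeasurable (Filter.Eventually.of_forall hbx.choose_spec)
    exact this.congr (Filter.Eventually.of_forall fun τ => mul_comm _ _)
  have hiy : Integrable (fun τ => f (τ - t) * y τ) := by
    have := (hf.2.1.comp_sub_right t).bdd_mul hy.1.continuous.aestronglyMeasurable (Filter.Eventually.of_forall hby.choose_spec)
    exact this.congr (Filter.Eventually.of_forall fun τ => mul_comm _ _)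
  have key : meas f x t - meas f y t = ∫ τ, (x τ - y τ) * f (τ - t) := by
    unfold meas
    rw [← integral_sub hix hiy]
    congr 1; funext τ; ring
  have hle : meas f x t - meas f y t ≤ dS x y := by
    rw [key]; exact le_csSup (dS_bddAbove hx hy) (mem_dS_set hg)
  linarith

lemma rob_sound (φ : BBSTL) : ∀ (x : ℝ → ℝ) (t : ℝ),
    (rob x φ t < 0 → ¬ Sat x φ t) ∧ (0 < rob x φ t → Sat x φ t) := by
  induction φ with
  | top =>
    intro x t
    exact ⟨fun h => absurd h (by simp [rob]), fun _ => trivial⟩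
  | atom f =>
    intro x t
    constructor
    · intro h hs
      rw [show rob x (.atom f) t = ((meas f.1 x t : ℝ) : EReal) from rfl] at h
      have : meas f.1 x t < 0 := by exact_mod_cast h
      exact absurd hs (not_le.2 this)
    · intro h
      rw [show rob x (.atom f) t = ((meas f.1 x t : ℝ) : EReal) from rfl] at h
      have : (0:ℝ) < meas f.1 x t := by exact_mod_cast h
      exact this.le
  | neg φ ih =>
    intro x t
    constructor
    · intro h hs
      have : 0 < rob x φ t := by
        have h2 : -rob x φ t < 0 := h
        simpa using EReal.neg_lt_comm.1 h2
      exact hs ((ih x t).2 this)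
    · intro h
      have : rob x φ t < 0 := by
        have h2 : (0:EReal) < -rob x φ t := h
        simpa using EReal.lt_neg_comm.1 h2
      exact (ih x t).1 this
  | or φ ψ ihφ ihψ =>
    intro x t
    constructor
    · intro h hs
      have h1 : rob x φ t < 0 := lt_of_le_of_lt (le_max_left _ _) h
      have h2 : rob x ψ t < 0 := lt_of_le_of_lt (le_max_right _ _) h
      rcases hs with hs | hs
      · exact (ihφ x t).1 h1 hs
      · exact (ihψ x t).1 h2 hs
    · intro h
      rcases lt_max_iff.1 h with h | h
      · exact Or.inl ((ihφ x t).2 h)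
      · exact Or.inr ((ihψ x t).2 h)
  | once a b φ ih =>
    intro x t
    constructor
    · intro h hs
      obtain ⟨t', ht', hsat⟩ := hs
      have : rob x φ t' < 0 :=
        lt_of_le_of_lt (le_iSup₂ (f := fun t' _ => rob x φ t') t' ht') h
      exact (ih x t').1 this hsat
    · intro h
      obtain ⟨t', ht', h'⟩ : ∃ t' ∈ Set.Icc (t - b) (t - a), 0 < rob x φ t' := by
        by_contra hc
        push_neg at hc
        exact absurd (iSup₂_le hc) (not_le.2 h)
      exact ⟨t', ht', (ih x t').2 h'⟩
  | hist a b φ ih =>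
    intro x t
    constructor
    · intro h hs
      obtain ⟨t', ht', h'⟩ : ∃ t' ∈ Set.Icc (t - b) (t - a), rob x φ t' < 0 := by
        by_contra hc
        push_neg at hc
        exact absurd (le_iInf₂ hc) (not_le.2 h)
      exact (ih x t').1 h' (hs t' ht')
    · intro h t' ht'
      exact (ih x t').2 (lt_of_lt_of_le h (iInf₂_le t' ht'))
  | since a b φ ψ ihφ ihψ =>
    intro x t
    constructor
    · intro h hs
      obtain ⟨t', ht', hψ, hφ⟩ := hs
      have hmin : min (rob x ψ t') (⨅ t'' ∈ Set.Ioc t' t, rob x φ t'') < 0 :=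
        lt_of_le_of_lt (le_iSup₂ (f := fun t' _ =>
          min (rob x ψ t') (⨅ t'' ∈ Set.Ioc t' t, rob x φ t'')) t' ht') h
      rcases min_lt_iff.1 hmin with h' | h'
      · exact (ihψ x t').1 h' hψ
      · obtain ⟨t'', ht'', h''⟩ : ∃ t'' ∈ Set.Ioc t' t, rob x φ t'' < 0 := by
          by_contra hc
          push_neg at hc
          exact absurd (le_iInf₂ hc) (not_le.2 h')
        exact (ihφ x t'').1 h'' (hφ t'' ht'')
    · intro h
      obtain ⟨t', ht', h'⟩ : ∃ t' ∈ Set.Icc (t - b) (t - a),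
          0 < min (rob x ψ t') (⨅ t'' ∈ Set.Ioc t' t, rob x φ t'') := by
        by_contra hc
        push_neg at hc
        exact absurd (iSup₂_le hc) (not_le.2 h)
      refine ⟨t', ht', (ihψ x t').2 (lt_of_lt_of_le h' (min_le_left _ _)), ?_⟩
      intro t'' ht''
      have : 0 < rob x φ t'' :=
        lt_of_lt_of_le (lt_of_lt_of_le h' (min_le_right _ _)) (iInf₂_le t'' ht'')
      exact (ihφ x t'').2 this

lemma ereal_le_add_iff {a b : EReal} {d : ℝ} : a ≤ b + (d : EReal) ↔ a - (d : EReal) ≤ b :=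
  (EReal.sub_le_iff_le_add (Or.inl (EReal.coe_ne_bot d)) (Or.inl (EReal.coe_ne_top d))).symm

lemma rob_lipschitz (φ : BBSTL) : ∀ x y : ℝ → ℝ, Signal x → Signal y → ∀ t : ℝ,
    rob x φ t ≤ rob y φ t + ((dS x y : ℝ) : EReal) := by
  induction φ with
  | top =>
    intro x y hx hy t
    rw [show rob y .top t = (⊤ : EReal) from rfl, EReal.top_add_coe]
    exact le_top
  | atom f =>
    intro x y hx hy t
    have := meas_sub_le hx hy f.2 t
    rw [show rob x (.atom f) t = ((meas f.1 x t : ℝ) : EReal) from rfl,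
      show rob y (.atom f) t = ((meas f.1 y t : ℝ) : EReal) from rfl, ← EReal.coe_add]
    exact_mod_cast this
  | neg φ ih =>
    intro x y hx hy t
    have h := ih y x hy hx t
    rw [dS_comm y x] at h
    rw [show rob x (.neg φ) t = -rob x φ t from rfl,
      show rob y (.neg φ) t = -rob y φ t from rfl]
    rw [ereal_le_add_iff]
    rw [show -rob x φ t - ((dS x y : ℝ) : EReal) = -(rob x φ t + ((dS x y : ℝ) : EReal)) by
      rw [EReal.neg_add (Or.inr (EReal.coe_ne_top _)) (Or.inr (EReal.coe_ne_bot _))]]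
    exact EReal.neg_le_neg_iff.2 h
  | or φ ψ ihφ ihψ =>
    intro x y hx hy t
    exact max_le
      ((ihφ x y hx hy t).trans (add_le_add_left (le_max_left _ _) _))
      ((ihψ x y hx hy t).trans (add_le_add_left (le_max_right _ _) _))
  | once a b φ ih =>
    intro x y hx hy t
    exact iSup₂_le fun t' ht' => (ih x y hx hy t').trans
      (add_le_add_left (le_iSup₂ (f := fun t' _ => rob y φ t') t' ht') _)
  | hist a b φ ih =>
    intro x y hx hy t
    rw [ereal_le_add_iff]
    exact le_iInf₂ fun t' ht' => ereal_le_add_iff.1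
      ((iInf₂_le (f := fun t' _ => rob x φ t') t' ht').trans (ih x y hx hy t'))
  | since a b φ ψ ihφ ihψ =>
    intro x y hx hy t
    refine iSup₂_le fun t' ht' => ?_
    have hB : (⨅ t'' ∈ Set.Ioc t' t, rob x φ t'')
        ≤ (⨅ t'' ∈ Set.Ioc t' t, rob y φ t'') + ((dS x y : ℝ) : EReal) := by
      rw [ereal_le_add_iff]
      exact le_iInf₂ fun t'' ht'' => ereal_le_add_iff.1
        ((iInf₂_le (f := fun t'' _ => rob x φ t'') t'' ht'').trans (ihφ x y hx hy t''))
    have hmin : min (rob x ψ t') (⨅ t'' ∈ Set.Ioc t' t, rob x φ t'')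
        ≤ min (rob y ψ t') (⨅ t'' ∈ Set.Ioc t' t, rob y φ t'') + ((dS x y : ℝ) : EReal) := by
      rcases le_total (rob y ψ t') (⨅ t'' ∈ Set.Ioc t' t, rob y φ t'') with h | h
      · rw [min_eq_left h]
        exact (min_le_left _ _).trans (ihψ x y hx hy t')
      · rw [min_eq_right h]
        exact (min_le_right _ _).trans hB
    exact hmin.trans (add_le_add_left
      (le_iSup₂ (f := fun t' _ => min (rob y ψ t') (⨅ t'' ∈ Set.Ioc t' t, rob y φ t'')) t' ht') _)

/-- Soundness of the robust semantics of BB-STL: negative robustness implies violation,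
positive robustness implies satisfaction, and any signal y within distance d(x,y) < ρ_φ(x)(t)
of x has the same truth value at t. -/
theorem bbstl_soundness (φ : BBSTL) (x : ℝ → ℝ) (hx : Signal x) (t : ℝ) :
    (rob x φ t < 0 → ¬ Sat x φ t) ∧
    (0 < rob x φ t → Sat x φ t) ∧
    (∀ y : ℝ → ℝ, Signal y → ((dS x y : ℝ) : EReal) < rob x φ t →
      (Sat x φ t → Sat y φ t) ∧ (¬ Sat x φ t → ¬ Sat y φ t)) := by
  refine ⟨(rob_sound φ x t).1, (rob_sound φ x t).2, ?_⟩
  intro y hy hlt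
  have hd0 : (0 : EReal) ≤ ((dS x y : ℝ) : EReal) := by
    exact_mod_cast dS_nonneg hx hy
  have hposx : 0 < rob x φ t := lt_of_le_of_lt hd0 hlt
  have hsatx : Sat x φ t := (rob_sound φ x t).2 hposx
  have hposy : 0 < rob y φ t := by
    by_contra hc
    push_neg at hc
    have h1 : rob x φ t ≤ rob y φ t + ((dS x y : ℝ) : EReal) := rob_lipschitz φ x y hx hy t
    have h2 : rob y φ t + ((dS x y : ℝ) : EReal) ≤ 0 + ((dS x y : ℝ) : EReal) :=
      add_le_add_left hc _
    rw [zero_add] at h2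
    exact absurd (h1.trans h2) (not_le.2 hlt)
  have hsaty : Sat y φ t := (rob_sound φ y t).2 hposy
  exact ⟨fun _ => hsaty, fun h => absurd hsatx h⟩
end

section
/- Fading memory of the measurement operator: let f ∈ ℱ satisfy f(t) = 0 for t > 0, and let w : (−∞, 0] → (0, 1] be continuous and increasing. Then for every ε > 0 and all u, v ∈ 𝒮 there exists δ > 0 such that sup_{t ≤ 0} |u(t) − v(t)| w(t) < δ implies |∫_ℝ f(τ)(u(τ) − v(τ)) dτ| < ε. -/
open MeasureTheory

/-- sup_{t ≤ 0} |u(t) − v(t)| w(t). -/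
noncomputable def fadeSup (u v w : ℝ → ℝ) : ℝ :=
  sSup ((fun t => |u t - v t| * w t) '' Set.Iic 0)

/-- Fading memory of the measurement operator: for a causal kernel f ∈ ℱ and a continuous
increasing weight function w : (−∞,0] → (0,1], for every ε > 0 and all signals u, v there is
δ > 0 such that sup_{t≤0} |u(t)−v(t)| w(t) < δ implies |∫ f(τ)(u(τ)−v(τ)) dτ| < ε. -/
theorem measurement_fading_memory (f : ℝ → ℝ) (hf : Kernel f)
    (hfc : ∀ t > (0:ℝ), f t = 0)
    (w : ℝ → ℝ) (hwc : ContinuousOn w (Set.Iic 0))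
    (hwm : ∀ s t : ℝ, s ≤ t → t ≤ 0 → w s ≤ w t)
    (hw01 : ∀ t ≤ (0:ℝ), 0 < w t ∧ w t ≤ 1)
    (ε : ℝ) (hε : 0 < ε) (u v : ℝ → ℝ) (hu : Signal u) (hv : Signal v) :
    ∃ δ > (0:ℝ), fadeSup u v w < δ → |∫ τ, f τ * (u τ - v τ)| < ε := by
  set g : ℝ → ℝ := fun τ => u τ - v τ with hg_def
  have hgc : Continuous g := (hu.1.continuous).sub (hv.1.continuous)
  have hgs : HasCompactSupport g := by
    have heq : g = u + (-v) := by funext τ; simp [hg_def, sub_eq_add_neg]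
    rw [heq]; exact hu.2.add hv.2.neg
  -- bound the support
  obtain ⟨r, hr⟩ := hgs.isCompact.isBounded.subset_closedBall 0
  set R : ℝ := max r 1 with hR_def
  have hR0 : (0:ℝ) < R := lt_of_lt_of_le one_pos (le_max_right _ _)
  have hgz : ∀ τ : ℝ, τ < -R → g τ = 0 := by
    intro τ hτ
    by_contra h
    have : τ ∈ tsupport g := subset_tsupport g h
    have := hr this
    simp only [Metric.mem_closedBall, Real.dist_eq, sub_zero] at this
    have : |τ| ≤ R := le_trans this (le_max_left _ _)
    rw [abs_le] at this
    linarith [this.1]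
  have hc : 0 < w (-R) := (hw01 (-R) (by linarith)).1
  refine ⟨ε * w (-R) / 2, by positivity, ?_⟩
  intro hlt
  set C : ℝ := ε / 2 with hC_def
  have hC0 : 0 ≤ C := by positivity
  -- bound elements of fadeSup set by fadeSup
  obtain ⟨M, hM⟩ := hgs.exists_bound_of_continuous hgc
  have hbdd : BddAbove ((fun t => |u t - v t| * w t) '' Set.Iic 0) := by
    refine ⟨M, ?_⟩
    rintro x ⟨t, ht, rfl⟩
    have h1 : |u t - v t| * w t ≤ |u t - v t| :=
      mul_le_of_le_one_right (abs_nonneg _) (hw01 t ht).2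
    calc |u t - v t| * w t ≤ |u t - v t| := h1
      _ = ‖g t‖ := by simp [hg_def, Real.norm_eq_abs]
      _ ≤ M := hM t
  have hle : ∀ t ≤ (0:ℝ), |g t| * w t ≤ fadeSup u v w := fun t ht =>
    le_csSup hbdd ⟨t, ht, rfl⟩
  -- pointwise bound
  have hpt : ∀ τ : ℝ, |f τ * g τ| ≤ |f τ| * C := by
    intro τ
    rcases lt_or_ge (0:ℝ) τ with h | h
    · simp [hfc τ h]
    rcases lt_or_ge τ (-R) with h' | h'
    · rw [hgz τ h', mul_zero, abs_zero]; positivity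
    · have hwτ : w (-R) ≤ w τ := hwm _ _ h' h
      have h1 : |g τ| * w (-R) ≤ |g τ| * w τ :=
        mul_le_mul_of_nonneg_left hwτ (abs_nonneg _)
      have h2 : |g τ| * w τ < ε * w (-R) / 2 := lt_of_le_of_lt (hle τ h) hlt
      have h3 : |g τ| < C := by
        have h4 : |g τ| * w (-R) < ε * w (-R) / 2 := lt_of_le_of_lt h1 h2
        rw [hC_def]
        nlinarith [h4, hc]
      calc |f τ * g τ| = |f τ| * |g τ| := abs_mul _ _
        _ ≤ |f τ| * C := mul_le_mul_of_nonneg_left h3.le (abs_nonneg _)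
  -- integrability
  have hint : Integrable (fun τ => f τ * g τ) := by
    have := hf.2.1.bdd_mul (hgc.aestronglyMeasurable) (Filter.Eventually.of_forall fun t => hM t)
    exact this.congr (by filter_upwards with τ; ring)
  have hintf : Integrable (fun τ => |f τ| * C) := (hf.2.1.abs.mul_const C)
  have key : |∫ τ, f τ * g τ| ≤ ∫ τ, |f τ| * C := by
    have := norm_integral_le_of_norm_le hintf
      (Filter.Eventually.of_forall fun τ =>
        show ‖f τ * g τ‖ ≤ |f τ| * C by rw [Real.norm_eq_abs]; exact hpt τ)
    simpa [Real.norm_eq_abs] using this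
  have hIC : (∫ τ, |f τ| * C) ≤ C := by
    rw [integral_mul_const]
    calc (∫ τ, |f τ|) * C ≤ 1 * C :=
          mul_le_mul_of_nonneg_right hf.2.2 hC0
      _ = C := one_mul C
  calc |∫ τ, f τ * (u τ - v τ)| = |∫ τ, f τ * g τ| := rfl
    _ ≤ ∫ τ, |f τ| * C := key
    _ ≤ C := hIC
    _ < ε := by rw [hC_def]; linarith
end

section
/- Stability of the Since functional under uniform perturbation: let R₁, R₂ be operators mapping 𝒮 to continuous functions ℝ → ℝ, let I = [a, b] with 0 ≤ a ≤ b, and for u ∈ 𝒮 define Ψu(0) := sup_{t' ∈ [−b, −a]} min( R₂u(t'), inf_{t'' ∈ (t', 0]} R₁u(t'') ). Let ε > 0 and u, v ∈ 𝒮 be such that |R_k u(t') − R_k v(t')| < ε for all t' ≤ 0 and k ∈ {1, 2}. Then |Ψu(0) − Ψv(0)| ≤ ε. -/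
open MeasureTheory

/-- The Since functional at time 0: Ψu(0) = sup_{t'∈[−b,−a]} min(R₂u(t'), inf_{t''∈(t',0]} R₁u(t'')). -/
noncomputable def sinceFun (R₁ R₂ : (ℝ → ℝ) → ℝ → ℝ) (a b : ℝ) (u : ℝ → ℝ) : ℝ :=
  sSup ((fun t' => min (R₂ u t') (sInf (R₁ u '' Set.Ioc t' 0))) '' Set.Icc (-b) (-a))

lemma since_aux (f₁ f₂ g₁ g₂ : ℝ → ℝ) (hf₁ : Continuous f₁) (hg₂ : Continuous g₂)
    (a b : ℝ) (ha : 0 ≤ a) (hab : a ≤ b) (ε : ℝ) (hε : 0 < ε)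
    (h₁ : ∀ t' ≤ (0:ℝ), f₁ t' ≤ g₁ t' + ε) (h₂ : ∀ t' ≤ (0:ℝ), f₂ t' ≤ g₂ t' + ε) :
    sSup ((fun t' => min (f₂ t') (sInf (f₁ '' Set.Ioc t' 0))) '' Set.Icc (-b) (-a)) ≤
    sSup ((fun t' => min (g₂ t') (sInf (g₁ '' Set.Ioc t' 0))) '' Set.Icc (-b) (-a)) + ε := by
  have hIcc : Set.Nonempty (Set.Icc (-b) (-a)) := Set.nonempty_Icc.mpr (by linarith)
  -- bound for the g-image
  obtain ⟨M, hM⟩ := isCompact_Icc.bddAbove_image (f := g₂)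
    (hg₂.continuousOn (s := Set.Icc (-b) (-a)))
  have hbdd : BddAbove ((fun t' => min (g₂ t') (sInf (g₁ '' Set.Ioc t' 0))) '' Set.Icc (-b) (-a)) := by
    refine ⟨M, ?_⟩
    rintro x ⟨t', ht', rfl⟩
    exact le_trans (min_le_left _ _) (hM ⟨t', ht', rfl⟩)
  -- pointwise bound
  have key : ∀ t' ∈ Set.Icc (-b) (-a),
      min (f₂ t') (sInf (f₁ '' Set.Ioc t' 0)) ≤ min (g₂ t') (sInf (g₁ '' Set.Ioc t' 0)) + ε := by
    intro t' ht'
    have ht'0 : t' ≤ 0 := le_trans ht'.2 (by linarith)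
    have hinf : sInf (f₁ '' Set.Ioc t' 0) ≤ sInf (g₁ '' Set.Ioc t' 0) + ε := by
      rcases eq_or_lt_of_le ht'0 with h0 | h0
      · simp [h0, Real.sInf_empty]; linarith
      · have hne : (Set.Ioc t' 0).Nonempty := ⟨0, h0, le_refl _⟩
        have hbb : BddBelow (f₁ '' Set.Ioc t' 0) := by
          refine BddBelow.mono (Set.image_mono Set.Ioc_subset_Icc_self) ?_
          exact isCompact_Icc.bddBelow_image (hf₁.continuousOn)
        have : sInf (f₁ '' Set.Ioc t' 0) - ε ≤ sInf (g₁ '' Set.Ioc t' 0) := by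
          apply le_csInf (hne.image _)
          rintro x ⟨t'', ht'', rfl⟩
          have := csInf_le hbb (Set.mem_image_of_mem f₁ ht'')
          have h1 := h₁ t'' ht''.2
          linarith
        linarith
    calc min (f₂ t') (sInf (f₁ '' Set.Ioc t' 0))
        ≤ min (g₂ t' + ε) (sInf (g₁ '' Set.Ioc t' 0) + ε) := min_le_min (h₂ t' ht'0) hinf
      _ = min (g₂ t') (sInf (g₁ '' Set.Ioc t' 0)) + ε := min_add_add_right _ _ _
  apply csSup_le (hIcc.image _)
  rintro x ⟨t', ht', rfl⟩
  exact le_trans (key t' ht') (add_le_add_left (le_csSup hbdd (Set.mem_image_of_mem _ ht')) ε)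

/-- Stability of the Since functional under uniform perturbation: if
|R_k u(t') − R_k v(t')| < ε for all t' ≤ 0 and k ∈ {1,2}, then |Ψu(0) − Ψv(0)| ≤ ε. -/
theorem since_stability (R₁ R₂ : (ℝ → ℝ) → ℝ → ℝ)
    (hCont : ∀ u : ℝ → ℝ, Signal u → Continuous (R₁ u) ∧ Continuous (R₂ u))
    (a b : ℝ) (ha : 0 ≤ a) (hab : a ≤ b)
    (ε : ℝ) (hε : 0 < ε) (u v : ℝ → ℝ) (hu : Signal u) (hv : Signal v)
    (h : ∀ t' ≤ (0:ℝ), |R₁ u t' - R₁ v t'| < ε ∧ |R₂ u t' - R₂ v t'| < ε) :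
    |sinceFun R₁ R₂ a b u - sinceFun R₁ R₂ a b v| ≤ ε := by
  have huv₁ : ∀ t' ≤ (0:ℝ), R₁ u t' ≤ R₁ v t' + ε := fun t' ht' => by
    have := (abs_lt.mp (h t' ht').1).2; linarith
  have huv₂ : ∀ t' ≤ (0:ℝ), R₂ u t' ≤ R₂ v t' + ε := fun t' ht' => by
    have := (abs_lt.mp (h t' ht').2).2; linarith
  have hvu₁ : ∀ t' ≤ (0:ℝ), R₁ v t' ≤ R₁ u t' + ε := fun t' ht' => by
    have := (abs_lt.mp (h t' ht').1).1; linarith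
  have hvu₂ : ∀ t' ≤ (0:ℝ), R₂ v t' ≤ R₂ u t' + ε := fun t' ht' => by
    have := (abs_lt.mp (h t' ht').2).1; linarith
  have h1 := since_aux (R₁ u) (R₂ u) (R₁ v) (R₂ v) (hCont u hu).1 (hCont v hv).2
    a b ha hab ε hε huv₁ huv₂
  have h2 := since_aux (R₁ v) (R₂ v) (R₁ u) (R₂ u) (hCont v hv).1 (hCont u hu).2
    a b ha hab ε hε hvu₁ hvu₂
  rw [abs_le]
  unfold sinceFun
  constructor <;> linarith
end

section
/- Volterra approximation theorem (Boyd–Chua, as stated in the paper): let M₁, M₂ > 0, let K_{M₁,M₂} := { u ∈ C(ℝ, ℝ) bounded : ‖u‖_∞ ≤ M₁ and ‖u(·−τ) − u‖_∞ ≤ M₂ τ for all τ ≥ 0 }, and let ε > 0. Let R be any operator mapping K_{M₁,M₂} to functions ℝ → ℝ that is time-invariant (R(u(·−τ))(t) = (Ru)(t−τ) for all u ∈ K_{M₁,M₂}, τ, t ∈ ℝ) and has fading memory on K_{M₁,M₂}. Then there exists a finite Volterra series operator N̂ such that for all u ∈ K_{M₁,M₂}: sup_{t∈ℝ} |R u(t)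 − N̂ u(t)| < ε. -/
open MeasureTheory

/-- Membership in the class K_{M₁,M₂}: bounded continuous functions u with ‖u‖_∞ ≤ M₁ and
‖u(·−τ) − u‖_∞ ≤ M₂ τ for all τ ≥ 0. -/
def MemK (M₁ M₂ : ℝ) (u : ℝ → ℝ) : Prop :=
  Continuous u ∧ (∀ t, |u t| ≤ M₁) ∧ ∀ τ ≥ (0:ℝ), ∀ t, |u (t - τ) - u t| ≤ M₂ * τ

/-- An operator N has fading memory on a set K of signals if there is an increasing weight
function w : (−∞,0] → (0,1] with limit 0 at −∞ such that for each u ∈ K and ε > 0 there is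
δ > 0 with: for all v ∈ K, sup_{t≤0} |u(t)−v(t)| w(t) < δ implies |Nu(0) − Nv(0)| < ε. -/
def FadingMemoryOn (N : (ℝ → ℝ) → ℝ → ℝ) (K : Set (ℝ → ℝ)) : Prop :=
  ∃ w : ℝ → ℝ,
    (∀ t ≤ (0:ℝ), 0 < w t ∧ w t ≤ 1) ∧
    (∀ s t : ℝ, s ≤ t → t ≤ 0 → w s ≤ w t) ∧
    Filter.Tendsto w Filter.atBot (nhds 0) ∧
    ∀ u ∈ K, ∀ ε > (0:ℝ), ∃ δ > (0:ℝ), ∀ v ∈ K,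
      fadeSup u v w < δ → |N u 0 - N v 0| < ε

/-- The data of a finite Volterra series operator: an order N, a constant term h₀, and
integrable kernels h_n ∈ L¹(ℝⁿ) for 1 ≤ n ≤ N. -/
structure VolterraSeries where
  order : ℕ
  h0 : ℝ
  h : (n : ℕ) → (Fin n → ℝ) → ℝ
  integrable : ∀ n, 1 ≤ n → n ≤ order → MeasureTheory.Integrable (h n)

/-- Application of a finite Volterra series operator:
(N̂u)(t) = h₀ + Σ_{n=1}^{N} ∫_{ℝⁿ} h_n(τ₁,…,τ_n) u(t−τ₁)⋯u(t−τ_n) dτ. -/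
noncomputable def VolterraSeries.apply (V : VolterraSeries) (x : ℝ → ℝ) (t : ℝ) : ℝ :=
  V.h0 + ∑ n ∈ Finset.Icc 1 V.order, ∫ τ : Fin n → ℝ, V.h n τ * ∏ j, x (t - τ j)


/-!
The class `K = K_{M₁,M₂}` is compact for the topology of pointwise convergence (Tychonoff), and
since its signals are uniformly Lipschitz, pointwise convergence on `K` is uniform convergence on
compact time windows. Fading memory therefore makes `u ↦ (R u)(0)` continuous on `K`, and so are
the window integrals `u ↦ ∫_{(a,b]} u(-τ) dτ`, which separate the points of `K` by the fundamental
theorem of calculus. By Stone–Weierstrass, `u ↦ (R u)(0)` is uniformly approximated on `K` by a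
polynomial in window integrals, and a product of `n` window integrals is an `n`-th order Volterra
term whose kernel is a product of indicator functions. Time invariance of both `R` and Volterra
operators moves the estimate from time `0` to every time `t`.
-/

open MeasureTheory Set Filter Topology
open scoped NNReal

lemma lipschitzWith_of_abs_sub_le {u : ℝ → ℝ} {M : ℝ}
    (h : ∀ τ ≥ (0:ℝ), ∀ t, |u (t - τ) - u t| ≤ M * τ) : LipschitzWith (Real.toNNReal M) u := by
  have hle : ∀ a b, a ≤ b → dist (u a) (u b) ≤ Real.toNNReal M * dist a b := fun a b hab => by
    have hba := sub_nonneg.2 hab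
    have hshift := h (b - a) hba b
    rw [sub_sub_cancel] at hshift
    rw [Real.dist_eq, Real.dist_eq, abs_sub_comm a b, abs_of_nonneg hba]
    exact hshift.trans (mul_le_mul_of_nonneg_right (Real.le_coe_toNNReal M) hba)
  refine LipschitzWith.of_dist_le_mul fun a b => ?_
  rcases le_total a b with hab | hab
  · exact hle a b hab
  · rw [dist_comm, dist_comm a]
    exact hle b a hab

namespace MemK

variable {M₁ M₂ : ℝ} {u : ℝ → ℝ}

lemma lipschitzWith (hu : MemK M₁ M₂ u) : LipschitzWith (Real.toNNReal M₂) u :=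
  lipschitzWith_of_abs_sub_le hu.2.2

lemma comp_add_right (hu : MemK M₁ M₂ u) (t : ℝ) : MemK M₁ M₂ (fun s => u (s + t)) :=
  ⟨hu.1.comp (continuous_add_const t), fun s => hu.2.1 (s + t), fun τ hτ s => by
    simpa only [sub_add_eq_add_sub] using hu.2.2 τ hτ (s + t)⟩

end MemK

lemma isCompact_setOf_memK (M₁ M₂ : ℝ) : IsCompact {u : ℝ → ℝ | MemK M₁ M₂ u} := by
  have hK : {u : ℝ → ℝ | MemK M₁ M₂ u} =
      {u | (∀ t, |u t| ≤ M₁) ∧ ∀ τ ≥ (0:ℝ), ∀ t, |u (t - τ) - u t| ≤ M₂ * τ} := by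
    ext u
    exact ⟨fun hu => hu.2, fun hu => ⟨(lipschitzWith_of_abs_sub_le hu.2).continuous, hu⟩⟩
  have hclosed : IsClosed {u : ℝ → ℝ | MemK M₁ M₂ u} := by
    rw [hK, ofPred_and]
    simp only [ofPred_forall]
    exact (isClosed_iInter fun t => isClosed_le (by fun_prop) continuous_const).inter
      (isClosed_iInter fun τ => isClosed_iInter fun _ => isClosed_iInter fun t =>
        isClosed_le (by fun_prop) continuous_const)
  exact (isCompact_univ_pi fun _ => isCompact_Icc).of_isClosed_subset hclosed
    fun u hu t _ => abs_le.1 (hu.2.1 t)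

section LipschitzFamily

variable {X : Type*} [PseudoMetricSpace X] {L : ℝ≥0}

/-- Closeness at the points of a finite `r`-net of `s` propagates to all of `s` by the Lipschitz
bound. -/
lemma eventually_forall_abs_sub_le {s : Set X} (hs : IsCompact s) {u : X → ℝ}
    (hu : LipschitzWith L u) {δ : ℝ} (hδ : 0 < δ) :
    ∀ᶠ v in 𝓝 u, LipschitzWith L v → ∀ x ∈ s, |u x - v x| ≤ δ := by
  set r := δ / (4 * (L + 1)) with hr
  have hLr : L * r ≤ δ / 4 := by
    rw [hr, mul_div_assoc', div_le_div_iff₀ (by positivity) (by norm_num)]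
    nlinarith
  obtain ⟨t, -, htfin, hcover⟩ := hs.finite_cover_balls (show 0 < r by positivity)
  have hnet : ∀ᶠ v in 𝓝 u, ∀ q ∈ t, |v q - u q| < δ / 2 :=
    htfin.eventually_all.2 fun q _ =>
      ((continuous_apply q).tendsto u).eventually (eventually_abs_sub_lt (u q) (half_pos hδ))
  filter_upwards [hnet] with v hv hvL x hx
  obtain ⟨q, hq, hxq⟩ := mem_iUnion₂.1 (hcover hx)
  have hxq : dist x q ≤ r := (Metric.mem_ball.1 hxq).le
  have hux : |u x - u q| ≤ L * r := by
    rw [← Real.dist_eq]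
    exact (hu.dist_le_mul x q).trans (by gcongr)
  have hvx : |v q - v x| ≤ L * r := by
    rw [← Real.dist_eq, dist_comm]
    exact (hvL.dist_le_mul x q).trans (by gcongr)
  linarith [abs_sub_le (u x) (u q) (v x), abs_sub_le (u q) (v q) (v x), abs_sub_comm (u q) (v q),
    hv q hq]

lemma continuousOn_of_forall_window {S : Set (X → ℝ)} (hS : ∀ u ∈ S, LipschitzWith L u)
    {Φ : (X → ℝ) → ℝ}
    (hΦ : ∀ u ∈ S, ∀ ε > 0, ∃ δ > 0, ∃ s, IsCompact s ∧
      ∀ v ∈ S, (∀ x ∈ s, |u x - v x| ≤ δ) → |Φ u - Φ v| < ε) :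
    ContinuousOn Φ S := by
  intro u hu
  refine Metric.tendsto_nhds.2 fun ε hε => ?_
  obtain ⟨δ, hδ, s, hs, hclose⟩ := hΦ u hu ε hε
  filter_upwards [self_mem_nhdsWithin,
    nhdsWithin_le_nhds (eventually_forall_abs_sub_le hs (hS u hu) hδ)] with v hv hnear
  rw [Real.dist_eq, abs_sub_comm]
  exact hclose v hv (hnear (hS v hv))

end LipschitzFamily

lemma fadeSup_le {u v w : ℝ → ℝ} {T B η : ℝ} (hw : ∀ t ≤ (0:ℝ), 0 < w t ∧ w t ≤ 1)
    (hmono : ∀ s t : ℝ, s ≤ t → t ≤ 0 → w s ≤ w t) (hT : T ≤ 0) (hB : ∀ t, |u t - v t| ≤ B)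
    (hwT : w T * B ≤ η) (hnear : ∀ t ∈ Icc T 0, |u t - v t| ≤ η) : fadeSup u v w ≤ η := by
  have hη : 0 ≤ η := (abs_nonneg _).trans (hnear 0 ⟨hT, le_rfl⟩)
  refine Real.sSup_le ?_ hη
  rintro _ ⟨t, ht, rfl⟩
  obtain ⟨hwt, hwt1⟩ := hw t ht
  rcases le_or_gt T t with hTt | htT
  · calc |u t - v t| * w t ≤ η * 1 := mul_le_mul (hnear t ⟨hTt, ht⟩) hwt1 hwt.le hη
      _ = η := mul_one η
  · calc |u t - v t| * w t ≤ B * w T :=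
          mul_le_mul (hB t) (hmono t T htT.le hT) hwt.le ((abs_nonneg _).trans (hB t))
      _ = w T * B := mul_comm _ _
      _ ≤ η := hwT

namespace FadingMemoryOn

variable {N : (ℝ → ℝ) → ℝ → ℝ} {K : Set (ℝ → ℝ)} {M : ℝ}

lemma exists_window (hK : ∀ u ∈ K, ∀ t, |u t| ≤ M) (hN : FadingMemoryOn N K) :
    ∀ u ∈ K, ∀ ε > 0, ∃ δ > 0, ∃ T,
      ∀ v ∈ K, (∀ t ∈ Icc T 0, |u t - v t| ≤ δ) → |N u 0 - N v 0| < ε := by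
  obtain ⟨w, hw, hmono, hlim, hcont⟩ := hN
  intro u hu ε hε
  obtain ⟨δ, hδ, hclose⟩ := hcont u hu ε hε
  have hsmall : ∀ᶠ t in atBot, w t * (2 * M) < δ / 2 := by
    have hlim' : Tendsto (fun t => w t * (2 * M)) atBot (𝓝 0) := by
      simpa using hlim.mul_const (2 * M)
    exact hlim'.eventually (gt_mem_nhds (half_pos hδ))
  obtain ⟨T, hT⟩ := eventually_atBot.1 hsmall
  refine ⟨δ / 2, half_pos hδ, min T 0, fun v hv hnear => hclose v hv ?_⟩
  have hB : ∀ t, |u t - v t| ≤ 2 * M := fun t => by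
    linarith [abs_sub (u t) (v t), hK u hu t, hK v hv t]
  exact (fadeSup_le hw hmono (min_le_right T 0) hB (hT _ (min_le_left T 0)).le hnear).trans_lt
    (half_lt_self hδ)

lemma continuousOn_apply_zero {L : ℝ≥0} (hS : ∀ u ∈ K, LipschitzWith L u)
    (hK : ∀ u ∈ K, ∀ t, |u t| ≤ M) (hN : FadingMemoryOn N K) :
    ContinuousOn (fun u => N u 0) K :=
  continuousOn_of_forall_window hS fun u hu ε hε =>
    let ⟨δ, hδ, T, hclose⟩ := hN.exists_window hK u hu ε hε
    ⟨δ, hδ, Icc T 0, isCompact_Icc, hclose⟩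

end FadingMemoryOn

noncomputable def windowIntegral (a b : ℝ) (u : ℝ → ℝ) : ℝ := ∫ τ in Ioc a b, u (-τ)

section WindowIntegral

variable {a b : ℝ} {u v : ℝ → ℝ}

lemma windowIntegral_sub (hu : Continuous u) (hv : Continuous v) :
    windowIntegral a b u - windowIntegral a b v = ∫ τ in Ioc a b, (u (-τ) - v (-τ)) :=
  (integral_sub (hu.comp continuous_neg).integrableOn_Ioc
    (hv.comp continuous_neg).integrableOn_Ioc).symm

lemma abs_windowIntegral_sub_le (hu : Continuous u) (hv : Continuous v) {δ : ℝ}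
    (h : ∀ x ∈ Icc (-b) (-a), |u x - v x| ≤ δ) :
    |windowIntegral a b u - windowIntegral a b v| ≤ δ * volume.real (Ioc a b) := by
  rw [windowIntegral_sub hu hv, ← Real.norm_eq_abs]
  exact norm_setIntegral_le_of_norm_le_const measure_Ioc_lt_top fun τ hτ =>
    h (-τ) ⟨neg_le_neg hτ.2, neg_le_neg hτ.1.le⟩

lemma continuousOn_windowIntegral {L : ℝ≥0} {S : Set (ℝ → ℝ)}
    (hS : ∀ u ∈ S, LipschitzWith L u) (a b : ℝ) : ContinuousOn (windowIntegral a b) S := by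
  refine continuousOn_of_forall_window hS fun u hu ε hε => ?_
  set m := volume.real (Ioc a b)
  have hm : 0 ≤ m := measureReal_nonneg
  refine ⟨ε / (m + 1), by positivity, Icc (-b) (-a), isCompact_Icc, fun v hv hnear => ?_⟩
  calc |windowIntegral a b u - windowIntegral a b v| ≤ ε / (m + 1) * m :=
        abs_windowIntegral_sub_le (hS u hu).continuous (hS v hv).continuous hnear
    _ < ε := by
        rw [div_mul_eq_mul_div, div_lt_iff₀ (by positivity)]
        nlinarith

lemma eq_zero_of_forall_setIntegral_Ioc_eq_zero {f : ℝ → ℝ} (hf : Continuous f)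
    (h : ∀ a b, ∫ x in Ioc a b, f x = 0) : f = 0 := by
  have hprim : (fun b => ∫ x in (0:ℝ)..b, f x) = 0 := funext fun b => by
    simp [intervalIntegral, h]
  funext x
  rw [← Continuous.deriv_integral f hf 0 x, hprim]
  simp

lemma eq_of_forall_windowIntegral_eq (hu : Continuous u) (hv : Continuous v)
    (h : ∀ a b, windowIntegral a b u = windowIntegral a b v) : u = v := by
  have hzero := eq_zero_of_forall_setIntegral_Ioc_eq_zero (f := fun τ => u (-τ) - v (-τ))
    (by fun_prop) fun a b => by rw [← windowIntegral_sub hu hv, h a b, sub_self]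
  funext t
  simpa [sub_eq_zero] using congrFun hzero (-t)

end WindowIntegral

lemma VolterraSeries.apply_comp_add_right (V : VolterraSeries) (u : ℝ → ℝ) (t : ℝ) :
    V.apply (fun s => u (s + t)) 0 = V.apply u t := by
  simp only [VolterraSeries.apply, zero_sub, neg_add_eq_sub]

lemma VolterraSeries.apply_eq_sum_Icc (V : VolterraSeries) (hV : ∀ n, V.order < n → V.h n = 0)
    {N : ℕ} (hN : V.order ≤ N) (u : ℝ → ℝ) (t : ℝ) :
    V.apply u t = V.h0 + ∑ n ∈ Finset.Icc 1 N, ∫ τ : Fin n → ℝ, V.h n τ * ∏ j, u (t - τ j) := by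
  rw [VolterraSeries.apply]
  congr 1
  refine Finset.sum_subset (Finset.Icc_subset_Icc_right hN) fun n hn hn' => ?_
  simp only [Finset.mem_Icc, not_and, not_le] at hn hn'
  simp [hV n (hn' hn.1)]

lemma integrable_mul_prod_comp {n : ℕ} {h : (Fin n → ℝ) → ℝ} (hh : Integrable h) {u : ℝ → ℝ}
    (hu : Measurable u) {C : ℝ} (hC : ∀ t, |u t| ≤ C) (t : ℝ) :
    Integrable (fun τ : Fin n → ℝ => h τ * ∏ j, u (t - τ j)) := by
  have hmeas : Measurable (fun τ : Fin n → ℝ => ∏ j, u (t - τ j)) :=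
    Finset.measurable_prod _ fun j _ => hu.comp (measurable_const.sub (measurable_pi_apply j))
  have hbdd : ∀ τ : Fin n → ℝ, ‖∏ j, u (t - τ j)‖ ≤ C ^ n := fun τ => by
    calc ‖∏ j, u (t - τ j)‖ = ∏ j, |u (t - τ j)| := by simp
      _ ≤ ∏ _j : Fin n, C := Finset.prod_le_prod (fun _ _ => abs_nonneg _) fun j _ => hC _
      _ = C ^ n := by simp
  simpa only [mul_comm] using hh.bdd_mul hmeas.aestronglyMeasurable (ae_of_all _ hbdd)

/-- The kernels are required to be integrable and to vanish above the order in every degree, so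
that two such series can be added degreewise. -/
def IsVolterraOn (S : Set (ℝ → ℝ)) (F : S → ℝ) : Prop :=
  ∃ V : VolterraSeries, (∀ n, Integrable (V.h n)) ∧ (∀ n, V.order < n → V.h n = 0) ∧
    ∀ u : S, F u = V.apply u 0

namespace IsVolterraOn

variable {S : Set (ℝ → ℝ)} {F G : S → ℝ}

lemma zero : IsVolterraOn S 0 :=
  ⟨⟨0, 0, 0, fun _ _ _ => integrable_zero _ _ _⟩, fun _ => integrable_zero _ _ _,
    fun _ _ => rfl, fun _ => by simp [VolterraSeries.apply]⟩

lemma smul (r : ℝ) (hF : IsVolterraOn S F) : IsVolterraOn S (r • F) := by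
  obtain ⟨V, hVi, hV0, hVF⟩ := hF
  refine ⟨⟨V.order, r * V.h0, r • V.h, fun n _ _ => (hVi n).smul r⟩, fun n => (hVi n).smul r,
    fun n hn => by simp [hV0 n hn], fun u => ?_⟩
  simp only [Pi.smul_apply, smul_eq_mul, hVF, VolterraSeries.apply, mul_add, Finset.mul_sum,
    ← integral_const_mul, mul_assoc]

lemma add (hS : ∀ u ∈ S, Measurable u ∧ ∃ C, ∀ t, |u t| ≤ C) (hF : IsVolterraOn S F)
    (hG : IsVolterraOn S G) : IsVolterraOn S (F + G) := by
  obtain ⟨V, hVi, hV0, hVF⟩ := hF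
  obtain ⟨W, hWi, hW0, hWG⟩ := hG
  refine ⟨⟨max V.order W.order, V.h0 + W.h0, V.h + W.h, fun n _ _ => (hVi n).add (hWi n)⟩,
    fun n => (hVi n).add (hWi n), fun n hn => ?_, fun u => ?_⟩
  · simp [hV0 n (lt_of_le_of_lt (le_max_left _ _) hn), hW0 n (lt_of_le_of_lt (le_max_right _ _) hn)]
  · obtain ⟨hu, C, hC⟩ := hS u u.2
    rw [Pi.add_apply, hVF, hWG, V.apply_eq_sum_Icc hV0 (le_max_left _ _),
      W.apply_eq_sum_Icc hW0 (le_max_right _ _), add_add_add_comm, ← Finset.sum_add_distrib]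
    simp only [VolterraSeries.apply, Pi.add_apply, add_mul]
    congr 1
    exact Finset.sum_congr rfl fun n _ => (integral_add (integrable_mul_prod_comp (hVi n) hu hC 0)
      (integrable_mul_prod_comp (hWi n) hu hC 0)).symm

end IsVolterraOn

lemma isVolterraOn_prod_windowIntegral (S : Set (ℝ → ℝ)) {n : ℕ} (p : Fin n → ℝ × ℝ) :
    IsVolterraOn S (fun u => ∏ j, windowIntegral (p j).1 (p j).2 u) := by
  let g : Fin n → ℝ → ℝ := fun j => (Ioc (p j).1 (p j).2).indicator 1
  have hg : ∀ j, Integrable (g j) := fun j =>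
    (integrable_indicator_iff measurableSet_Ioc).2 (integrableOn_const measure_Ioc_lt_top.ne)
  -- the tensor product of the window indicators, in degree `n` only
  let h : (k : ℕ) → (Fin k → ℝ) → ℝ := fun k τ =>
    if hk : k = n then ∏ j, g (Fin.cast hk j) (τ j) else 0
  have hh : ∀ k, Integrable (h k) := fun k => by
    by_cases hk : k = n
    · subst hk
      simp only [h, Fin.cast_eq_self]
      exact Integrable.fin_nat_prod hg
    · simp [h, hk]
  refine ⟨⟨n, if n = 0 then 1 else 0, h, fun k _ _ => hh k⟩, hh, fun k hk => ?_, fun u => ?_⟩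
  · funext τ
    simp [h, hk.ne']
  have hterm : ∫ τ : Fin n → ℝ, h n τ * ∏ j, (u : ℝ → ℝ) (0 - τ j) =
      ∏ j, windowIntegral (p j).1 (p j).2 u := by
    simp only [h, dif_pos rfl, Fin.cast_eq_self, zero_sub, ← Finset.prod_mul_distrib]
    rw [volume_pi, integral_fin_nat_prod_eq_prod (fun j s => g j s * (u : ℝ → ℝ) (-s))]
    refine Finset.prod_congr rfl fun j _ => ?_
    rw [windowIntegral, ← integral_indicator measurableSet_Ioc]
    congr 1
    funext s
    simp [g, indicator]
  rcases Nat.eq_zero_or_pos n with rfl | hn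
  · simp [VolterraSeries.apply]
  · rw [VolterraSeries.apply, if_neg hn.ne', zero_add, Finset.sum_eq_single_of_mem n
      (Finset.mem_Icc.2 ⟨hn, le_rfl⟩) fun k _ hkn => by simp [h, hkn]]
    exact hterm.symm

lemma exists_eq_prod_of_mem_closure_range {M ι : Type*} [CommMonoid M] {G : ι → M} {f : M}
    (hf : f ∈ Submonoid.closure (range G)) : ∃ (n : ℕ) (p : Fin n → ι), f = ∏ j, G (p j) := by
  induction hf using Submonoid.closure_induction with
  | mem _ hx =>
    obtain ⟨i, rfl⟩ := hx
    exact ⟨1, fun _ => i, by simp⟩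
  | one => exact ⟨0, Fin.elim0, by simp⟩
  | mul _ _ _ _ hx hy =>
    obtain ⟨n, p, rfl⟩ := hx
    obtain ⟨m, q, rfl⟩ := hy
    exact ⟨n + m, Fin.append p q, by simp [Fin.prod_univ_add]⟩

noncomputable def windowIntegralMap (M₁ M₂ : ℝ) (p : ℝ × ℝ) : C({u : ℝ → ℝ | MemK M₁ M₂ u}, ℝ) :=
  ⟨_, (continuousOn_windowIntegral (fun _ hu => MemK.lipschitzWith hu) p.1 p.2).domRestrict⟩

lemma separatesPoints_adjoin_windowIntegralMap (M₁ M₂ : ℝ) :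
    (Algebra.adjoin ℝ (range (windowIntegralMap M₁ M₂))).SeparatesPoints := by
  intro u v huv
  by_contra! hall
  refine huv (Subtype.ext (eq_of_forall_windowIntegral_eq u.2.1 v.2.1 fun a b => ?_))
  exact hall _ ⟨windowIntegralMap M₁ M₂ (a, b), Algebra.subset_adjoin ⟨(a, b), rfl⟩, rfl⟩

lemma isVolterraOn_of_mem_adjoin {M₁ M₂ : ℝ} {f : C({u : ℝ → ℝ | MemK M₁ M₂ u}, ℝ)}
    (hf : f ∈ Algebra.adjoin ℝ (range (windowIntegralMap M₁ M₂))) :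
    IsVolterraOn {u | MemK M₁ M₂ u} f := by
  have hS : ∀ u ∈ {u : ℝ → ℝ | MemK M₁ M₂ u}, Measurable u ∧ ∃ C, ∀ t, |u t| ≤ C :=
    fun u hu => ⟨hu.1.measurable, M₁, hu.2.1⟩
  rw [← Subalgebra.mem_toSubmodule, Algebra.adjoin_eq_span] at hf
  induction hf using Submodule.span_induction with
  | mem m hm =>
    obtain ⟨n, p, rfl⟩ := exists_eq_prod_of_mem_closure_range hm
    rw [ContinuousMap.coe_prod, Finset.prod_fn]
    exact isVolterraOn_prod_windowIntegral _ p
  | zero => exact IsVolterraOn.zero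
  | add _ _ _ _ hf hg => exact hf.add hS hg
  | smul r _ _ hf => exact hf.smul r

theorem boyd_chua_volterra_approx_general (M₁ M₂ ε : ℝ) (hε : 0 < ε)
    (R : (ℝ → ℝ) → ℝ → ℝ)
    (hTI : ∀ u : ℝ → ℝ, MemK M₁ M₂ u → ∀ τ t : ℝ, R (fun s => u (s - τ)) t = R u (t - τ))
    (hFM : FadingMemoryOn R {u | MemK M₁ M₂ u}) :
    ∃ V : VolterraSeries, ∀ u : ℝ → ℝ, MemK M₁ M₂ u →
      ∀ t, |R u t - V.apply u t| < ε := by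
  have : CompactSpace {u : ℝ → ℝ | MemK M₁ M₂ u} :=
    isCompact_iff_compactSpace.1 (isCompact_setOf_memK M₁ M₂)
  let F : C({u : ℝ → ℝ | MemK M₁ M₂ u}, ℝ) :=
    ⟨_, (hFM.continuousOn_apply_zero (fun _ hu => hu.lipschitzWith) fun _ hu => hu.2.1).domRestrict⟩
  obtain ⟨⟨g, hg⟩, hgF⟩ := ContinuousMap.exists_mem_subalgebra_near_continuousMap_of_separatesPoints
    _ (separatesPoints_adjoin_windowIntegralMap M₁ M₂) F ε hε
  obtain ⟨V, -, -, hV⟩ := isVolterraOn_of_mem_adjoin hg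
  refine ⟨V, fun u hu t => ?_⟩
  let x : {u : ℝ → ℝ | MemK M₁ M₂ u} := ⟨fun s => u (s + t), hu.comp_add_right t⟩
  have hR : R u t = F x := by simpa [F, x] using (hTI u hu (-t) 0).symm
  have hVg : V.apply u t = g x := by rw [hV x, V.apply_comp_add_right]
  rw [hR, hVg, abs_sub_comm, ← Real.norm_eq_abs]
  exact (ContinuousMap.norm_coe_le_norm (g - F) x).trans_lt hgF

/-- Volterra approximation theorem (Boyd–Chua): any time-invariant operator R with fading
memory on K_{M₁,M₂} can be approximated to within any ε > 0, uniformly in time and over all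
u ∈ K_{M₁,M₂}, by a finite Volterra series operator. -/
theorem boyd_chua_volterra_approx (M₁ M₂ ε : ℝ) (hM₁ : 0 < M₁) (hM₂ : 0 < M₂) (hε : 0 < ε)
    (R : (ℝ → ℝ) → ℝ → ℝ)
    (hTI : ∀ u : ℝ → ℝ, MemK M₁ M₂ u → ∀ τ t : ℝ, R (fun s => u (s - τ)) t = R u (t - τ))
    (hFM : FadingMemoryOn R {u | MemK M₁ M₂ u}) :
    ∃ V : VolterraSeries, ∀ u : ℝ → ℝ, MemK M₁ M₂ u →
      ∀ t, |R u t - V.apply u t| < ε :=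
  boyd_chua_volterra_approx_general M₁ M₂ ε hε R hTI hFM
end
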